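/- (Barenblatt's lemma, part 2.) Let Q be a quantity space over the scalar system ℝ>0, and let d, d₁, …, d_m, b₁, …, b_r ∈ Q be such that b₁, …, b_r are independent (λ • ∏ⱼ bⱼ^{kⱼ} = 1_Q with λ ∈ ℝ>0 and integers kⱼ implies all kⱼ = 0) and d ~ 1_Q and dᵢ ~ 1_Q for all i. Let Ψ be a quantity function assigning to each tuple (p₁, …, p_m, q₁, …, q_r) with pᵢ ~ dᵢ and qⱼ ~ bⱼ a quantity Ψ(p, q) ~ d, and suppose Ψ has a covariant scalar representation. Then Ψ does not depend on its last r arguments: for all admissible p and all admissible q, q' one has Ψ(p₁, …, p_m, q₁, …, q_r) = Ψ(p₁, …, p_m, q₁', …, q_r'); equivalently, there is a function Φ with Ψ(p, q) = Φ(p₁, …, p_m) for all admissible inputs. -/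

import Mathlib

/-- A *scalable (commutative) monoid* over a scalar system `K ⊆ F`:
`K` is a subset of the field `F` closed under addition, containing `1`,
closed under multiplication and under inverses of nonzero elements
(so the nonzero elements of `K` form a group under multiplication),
together with a scalar multiplication `smul` satisfying the axioms
`1 • q = q`, `α • (β • q) = (α β) • q` and `α • (q * q') = (α • q) * q'`
for scalars in `K`. -/
structure ScalableMonoid (F : Type*) [Field F] (Q : Type*) [CommMonoid Q] where
  K : Set F
  one_mem : (1 : F) ∈ K
  add_mem : ∀ {a b : F}, a ∈ K → b ∈ K → a + b ∈ K
  mul_mem : ∀ {a b : F}, a ∈ K → b ∈ K → a * b ∈ K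
  inv_mem : ∀ {a : F}, a ∈ K → a ≠ 0 → a⁻¹ ∈ K
  smul : F → Q → Q
  smul_one : ∀ q : Q, smul 1 q = q
  smul_smul : ∀ {a b : F}, a ∈ K → b ∈ K → ∀ q : Q, smul a (smul b q) = smul (a * b) q
  smul_mul : ∀ {a : F}, a ∈ K → ∀ q q' : Q, smul a (q * q') = smul a q * q'

/-- `b : Fin n → Qˣ` (a list of invertible quantities) is a basis for the scalable
monoid `M` if every quantity has a unique expansion `q = μ • ∏ i, b i ^ k i`
with `μ ∈ K` and integer exponents `k`. -/
def ScalableMonoid.IsBasis {F : Type*} [Field F] {Q : Type*} [CommMonoid Q]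
    (M : ScalableMonoid F Q) {n : ℕ} (b : Fin n → Qˣ) : Prop :=
  ∀ q : Q, ∃! p : M.K × (Fin n → ℤ),
    q = M.smul (p.1 : F) (↑(∏ i, b i ^ p.2 i) : Q)

/-- A quantity space is a scalable monoid having a (finite) basis. -/
def ScalableMonoid.IsQuantitySpace {F : Type*} [Field F] {Q : Type*} [CommMonoid Q]
    (M : ScalableMonoid F Q) : Prop :=
  ∃ (n : ℕ) (b : Fin n → Qˣ), M.IsBasis b

/-- The measure `μ_B(q)`: the unique scalar in the expansion of `q` relative to
the basis `B`. -/
noncomputable def ScalableMonoid.measure {F : Type*} [Field F] {Q : Type*} [CommMonoid Q]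
    (M : ScalableMonoid F Q) {n : ℕ} {b : Fin n → Qˣ} (hB : M.IsBasis b) (q : Q) : F :=
  ((hB q).choose.1 : F)

/-- Quantities `q, q'` are equidimensional (`q ~ q'`) if `α • q = β • q'`
for some scalars `α, β ∈ K`. -/
def ScalableMonoid.Equidim {F : Type*} [Field F] {Q : Type*} [CommMonoid Q]
    (M : ScalableMonoid F Q) (q q' : Q) : Prop :=
  ∃ α β : F, α ∈ M.K ∧ β ∈ M.K ∧ M.smul α q = M.smul β q'

/-!
Fix a basis `e`. Independence of the `bⱼ` says that the integer matrix of their exponents relative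
to `e` has `ℤ`-independent rows; its Gram determinant is then a nonzero integer, so the rows stay
independent over `ℝ`. Hence, in logarithmic coordinates, one can rescale the basis `eᵢ ↦ γᵢ • eᵢ`
so that every `qⱼ ~ bⱼ` acquires any prescribed positive measure, e.g. that of `q'ⱼ`, while the
measures of dimensionless quantities, such as the `pᵢ` and the values of `Ψ`, do not change.
Covariance then gives `μ(Ψ(p, q)) = μ(Ψ(p, q'))`, and equidimensional quantities with equal
measures are equal.
-/

open scoped Matrix

theorem Finset.prod_zpow_eq_zpow_sum {G ι : Type*} [CommGroup G] (s : Finset ι) (f : ι → ℤ)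
    (x : G) : ∏ i ∈ s, x ^ f i = x ^ ∑ i ∈ s, f i := by
  induction s using Finset.cons_induction with
  | empty => simp
  | cons a s ha ih => rw [prod_cons, sum_cons, zpow_add, ih]

theorem Finset.prod_prod_zpow_eq_prod_zpow_vecMul {G ι κ : Type*} [CommGroup G] [Fintype ι]
    [Fintype κ] (e : ι → G) (A : Matrix κ ι ℤ) (v : κ → ℤ) :
    ∏ j, (∏ i, e i ^ A j i) ^ v j = ∏ i, e i ^ (v ᵥ* A) i := by
  simp only [Matrix.vecMul, dotProduct, ← Finset.prod_zpow, ← zpow_mul]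
  rw [Finset.prod_comm]
  simp only [Finset.prod_zpow_eq_zpow_sum, mul_comm]

namespace Matrix

variable {m n : Type*} [Fintype m] [Fintype n] [DecidableEq m]

theorem det_mul_transpose_ne_zero {R : Type*} [CommRing R] [LinearOrder R]
    [IsStrictOrderedRing R] {A : Matrix m n R} (hA : ∀ v, v ᵥ* A = 0 → v = 0) :
    (A * Aᵀ).det ≠ 0 := by
  intro h
  obtain ⟨v, hv, hvA⟩ := exists_vecMul_eq_zero_iff.2 h
  refine hv (hA v (dotProduct_self_eq_zero.1 ?_))
  calc v ᵥ* A ⬝ᵥ v ᵥ* A = v ᵥ* A ⬝ᵥ Aᵀ *ᵥ v := by rw [mulVec_transpose]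
    _ = 0 := by rw [dotProduct_mulVec, vecMul_vecMul, hvA, zero_dotProduct]

theorem mulVec_map_intCast_surjective {K : Type*} [Field K] [CharZero K] {A : Matrix m n ℤ}
    (hA : ∀ v, v ᵥ* A = 0 → v = 0) : Function.Surjective (A.map (Int.cast : ℤ → K)).mulVec := by
  set B := A.map (Int.cast : ℤ → K)
  have hdet : IsUnit (B * Bᵀ).det := by
    have : B * Bᵀ = (Int.castRingHom K).mapMatrix (A * Aᵀ) := by
      rw [RingHom.mapMatrix_apply, Matrix.map_mul, transpose_map]; rfl
    rw [isUnit_iff_ne_zero, this, ← RingHom.map_det, eq_intCast, Int.cast_ne_zero]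
    exact det_mul_transpose_ne_zero hA
  exact mulVec_surjective_iff_exists_right_inverse.2
    ⟨Bᵀ * (B * Bᵀ)⁻¹, by rw [← Matrix.mul_assoc, mul_nonsing_inv _ hdet]⟩

end Matrix

namespace ScalableMonoid

variable {F : Type*} [Field F] {Q : Type*} [CommMonoid Q] {M : ScalableMonoid F Q}

lemma smul_mul_smul {a b : F} (ha : a ∈ M.K) (hb : b ∈ M.K) (q q' : Q) :
    M.smul a q * M.smul b q' = M.smul (a * b) (q * q') := by
  rw [mul_comm (M.smul a q), ← M.smul_mul hb, mul_comm q', ← M.smul_mul ha,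
    M.smul_smul hb ha, mul_comm b a]

namespace Equidim

lemma refl (q : Q) : M.Equidim q q := ⟨1, 1, M.one_mem, M.one_mem, rfl⟩

lemma symm {q q' : Q} (h : M.Equidim q q') : M.Equidim q' q := by
  obtain ⟨α, β, hα, hβ, h⟩ := h
  exact ⟨β, α, hβ, hα, h.symm⟩

lemma trans {q q' q'' : Q} (h : M.Equidim q q') (h' : M.Equidim q' q'') : M.Equidim q q'' := by
  obtain ⟨α, β, hα, hβ, h⟩ := h
  obtain ⟨α', β', hα', hβ', h'⟩ := h'
  refine ⟨α' * α, β * β', M.mul_mem hα' hα, M.mul_mem hβ hβ', ?_⟩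
  rw [← M.smul_smul hα' hα, h, M.smul_smul hα' hβ, mul_comm α' β, ← M.smul_smul hβ hα', h',
    M.smul_smul hβ hβ']

end Equidim

variable (M) in
def scalarUnits : Subgroup Fˣ where
  carrier := {a | (a : F) ∈ M.K}
  one_mem' := M.one_mem
  mul_mem' := M.mul_mem
  inv_mem' {a} ha := by simpa using M.inv_mem ha a.ne_zero

variable (M) in
def unitsSMul : M.scalarUnits × Qˣ →* Qˣ where
  toFun au :=
    { val := M.smul (au.1 : Fˣ) au.2
      inv := M.smul ((au.1 : Fˣ) : F)⁻¹ ↑au.2⁻¹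
      val_inv := by
        rw [smul_mul_smul au.1.2 (M.inv_mem au.1.2 (Units.ne_zero _)),
          mul_inv_cancel₀ (Units.ne_zero _), Units.mul_inv, M.smul_one]
      inv_val := by
        rw [smul_mul_smul (M.inv_mem au.1.2 (Units.ne_zero _)) au.1.2,
          inv_mul_cancel₀ (Units.ne_zero _), Units.inv_mul, M.smul_one] }
  map_one' := Units.ext <| by simp [M.smul_one]
  map_mul' au bv := Units.ext <| by
    simp [smul_mul_smul au.1.2 bv.1.2]

@[simp]
lemma coe_unitsSMul (a : M.scalarUnits) (u : Qˣ) :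
    (M.unitsSMul (a, u) : Q) = M.smul ((a : Fˣ) : F) u := rfl

lemma coe_prod_unitsSMul_zpow {ι : Type*} (s : Finset ι) (a : ι → M.scalarUnits) (u : ι → Qˣ)
    (k : ι → ℤ) :
    ((∏ i ∈ s, M.unitsSMul (a i, u i) ^ k i : Qˣ) : Q) =
      M.smul (((∏ i ∈ s, a i ^ k i : M.scalarUnits) : Fˣ) : F) ↑(∏ i ∈ s, u i ^ k i) := by
  simp only [← map_zpow, ← map_prod, Prod.pow_mk, ← prod_mk_prod, coe_unitsSMul]

namespace IsBasis

variable {n : ℕ} {e : Fin n → Qˣ}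

noncomputable def exponents (hB : M.IsBasis e) (q : Q) : Fin n → ℤ := (hB q).choose.2

variable (hB : M.IsBasis e)

lemma measure_mem (q : Q) : M.measure hB q ∈ M.K := (hB q).choose.1.2

lemma eq_smul_prod_exponents (q : Q) :
    q = M.smul (M.measure hB q) ↑(∏ i, e i ^ hB.exponents q i) :=
  (hB q).choose_spec.1

lemma measure_eq_and_exponents_eq {q : Q} {a : F} (ha : a ∈ M.K) {k : Fin n → ℤ}
    (h : q = M.smul a ↑(∏ i, e i ^ k i)) : M.measure hB q = a ∧ hB.exponents q = k := by
  have := ((hB q).choose_spec.2 (⟨⟨a, ha⟩, k⟩ : M.K × (Fin n → ℤ)) h).symm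
  exact ⟨congrArg (fun p => (p.1 : F)) this, congrArg Prod.snd this⟩

lemma exponents_one : hB.exponents 1 = 0 :=
  (hB.measure_eq_and_exponents_eq M.one_mem (by simp [M.smul_one])).2

lemma exponents_smul {a : F} (ha : a ∈ M.K) (q : Q) :
    hB.exponents (M.smul a q) = hB.exponents q := by
  refine (hB.measure_eq_and_exponents_eq (M.mul_mem ha (hB.measure_mem q)) ?_).2
  rw [← M.smul_smul ha (hB.measure_mem q), ← hB.eq_smul_prod_exponents q]

lemma exponents_eq_of_equidim {q q' : Q} (h : M.Equidim q q') :
    hB.exponents q = hB.exponents q' := by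
  obtain ⟨α, β, hα, hβ, h⟩ := h
  rw [← hB.exponents_smul hα, h, hB.exponents_smul hβ]

lemma eq_of_equidim_of_measure_eq {q q' : Q} (h : M.Equidim q q')
    (hm : M.measure hB q = M.measure hB q') : q = q' := by
  rw [hB.eq_smul_prod_exponents q, hB.eq_smul_prod_exponents q', hm,
    hB.exponents_eq_of_equidim h]

lemma eq_smul_prod_rescale (γ : Fin n → M.scalarUnits) (q : Q) :
    q = M.smul (M.measure hB q * (((∏ i, γ i ^ hB.exponents q i)⁻¹ : M.scalarUnits) : Fˣ))
      ↑(∏ i, M.unitsSMul (γ i, e i) ^ hB.exponents q i) := by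
  set c : M.scalarUnits := ∏ i, γ i ^ hB.exponents q i
  rw [coe_prod_unitsSMul_zpow, M.smul_smul (M.mul_mem (hB.measure_mem q) c⁻¹.2) c.2, mul_assoc,
    ← Units.val_mul, ← Subgroup.coe_mul, inv_mul_cancel, Subgroup.coe_one, Units.val_one,
    mul_one, ← hB.eq_smul_prod_exponents q]

lemma rescale (hB : M.IsBasis e) (γ : Fin n → M.scalarUnits) :
    M.IsBasis (fun i => M.unitsSMul (γ i, e i)) := by
  intro q
  refine ⟨(⟨_, M.mul_mem (hB.measure_mem q) (∏ i, γ i ^ hB.exponents q i)⁻¹.2⟩, hB.exponents q),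
    hB.eq_smul_prod_rescale γ q, ?_⟩
  rintro ⟨⟨ν, hν⟩, k⟩ h
  rw [coe_prod_unitsSMul_zpow, M.smul_smul hν (∏ i, γ i ^ k i).2] at h
  obtain ⟨hm, rfl⟩ := hB.measure_eq_and_exponents_eq (M.mul_mem hν (∏ i, γ i ^ k i).2) h
  ext
  · simp only [hm, Subgroup.coe_inv, Units.val_inv_eq_inv_val, ← div_eq_mul_inv]
    exact (mul_div_cancel_right₀ _ (Units.ne_zero _)).symm
  · rfl

lemma measure_rescale (γ : Fin n → M.scalarUnits) (q : Q) :
    M.measure (hB.rescale γ) q =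
      M.measure hB q * (((∏ i, γ i ^ hB.exponents q i)⁻¹ : M.scalarUnits) : Fˣ) :=
  ((hB.rescale γ).measure_eq_and_exponents_eq
    (M.mul_mem (hB.measure_mem q) (∏ i, γ i ^ hB.exponents q i)⁻¹.2)
    (hB.eq_smul_prod_rescale γ q)).1

lemma measure_rescale_of_equidim_one (γ : Fin n → M.scalarUnits) {q : Q} (hq : M.Equidim q 1) :
    M.measure (hB.rescale γ) q = M.measure hB q := by
  simp [hB.measure_rescale, hB.exponents_eq_of_equidim hq, hB.exponents_one]

lemma eq_zero_of_vecMul_exponents_eq_zero (hK0 : (0 : F) ∉ M.K) {r : ℕ} {b : Fin r → Qˣ}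
    (hb : ∀ lam : F, lam ∈ M.K → ∀ kv : Fin r → ℤ,
      M.smul lam (↑(∏ j, b j ^ kv j) : Q) = 1 → kv = 0)
    {v : Fin r → ℤ} (hv : v ᵥ* Matrix.of (fun j => hB.exponents (b j)) = 0) : v = 0 := by
  let β j : M.scalarUnits :=
    ⟨Units.mk0 (M.measure hB (b j)) (ne_of_mem_of_not_mem (hB.measure_mem _) hK0),
      hB.measure_mem _⟩
  have hbβ : ∀ j, b j = M.unitsSMul (β j, ∏ i, e i ^ hB.exponents (b j) i) :=
    fun j => Units.ext (hB.eq_smul_prod_exponents _)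
  set c : M.scalarUnits := ∏ j, β j ^ v j
  have hprod : (↑(∏ j, b j ^ v j) : Q) = M.smul ((c : Fˣ) : F) 1 := by
    calc (↑(∏ j, b j ^ v j) : Q)
        = ↑(∏ j, M.unitsSMul (β j, ∏ i, e i ^ hB.exponents (b j) i) ^ v j) :=
          congrArg _ (Finset.prod_congr rfl fun j _ => congrArg (· ^ v j) (hbβ j))
      _ = M.smul ((c : Fˣ) : F)
            ↑(∏ i, e i ^ (v ᵥ* Matrix.of (fun j => hB.exponents (b j))) i) := by
          rw [coe_prod_unitsSMul_zpow, ← Finset.prod_prod_zpow_eq_prod_zpow_vecMul]; rfl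
      _ = M.smul ((c : Fˣ) : F) 1 := by simp [hv]
  refine hb _ c⁻¹.2 v ?_
  rw [hprod, M.smul_smul c⁻¹.2 c.2, ← Units.val_mul, ← Subgroup.coe_mul, inv_mul_cancel,
    Subgroup.coe_one, Units.val_one, M.smul_one]

end IsBasis

end ScalableMonoid

namespace ScalableMonoid.IsBasis

variable {Q : Type*} [CommMonoid Q] {M : ScalableMonoid ℝ Q} {n r : ℕ} {e : Fin n → Qˣ}

lemma measure_pos (hB : M.IsBasis e) (hK : M.K = {x : ℝ | 0 < x}) (z : Q) :
    0 < M.measure hB z := by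
  simpa [hK] using hB.measure_mem z

lemma exists_rescale_measure_eq (hB : M.IsBasis e) (hK : M.K = {x : ℝ | 0 < x})
    {b : Fin r → Qˣ}
    (hb : ∀ lam : ℝ, lam ∈ M.K → ∀ kv : Fin r → ℤ,
      M.smul lam (↑(∏ j, b j ^ kv j) : Q) = 1 → kv = 0)
    {q : Fin r → Q} (hq : ∀ j, M.Equidim (q j) ↑(b j)) {t : Fin r → ℝ} (ht : ∀ j, 0 < t j) :
    ∃ γ : Fin n → M.scalarUnits, ∀ j, M.measure (hB.rescale γ) (q j) = t j := by
  obtain ⟨x, hx⟩ := Matrix.mulVec_map_intCast_surjective (K := ℝ)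
    (fun v => hB.eq_zero_of_vecMul_exponents_eq_zero (by rw [hK]; exact lt_irrefl (0 : ℝ)) hb)
    (fun j => Real.log (M.measure hB (q j) / t j))
  let γ i : M.scalarUnits :=
    ⟨Units.mk0 (Real.exp (x i)) (Real.exp_pos _).ne',
      show Real.exp (x i) ∈ M.K by rw [hK]; exact Real.exp_pos _⟩
  refine ⟨γ, fun j => ?_⟩
  have hγ : (((∏ i, γ i ^ hB.exponents (b j) i : M.scalarUnits) : ℝˣ) : ℝ) =
      M.measure hB (q j) / t j := by
    rw [← Real.exp_log (div_pos (hB.measure_pos hK _) (ht j)), ← congrFun hx j]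
    simp only [γ, Subgroup.val_finsetProd, SubgroupClass.coe_zpow, Units.coe_prod,
      Units.val_zpow_eq_zpow_val, Units.val_mk0, Matrix.mulVec, dotProduct, Matrix.map_apply,
      Matrix.of_apply, Real.exp_sum]
    refine Finset.prod_congr rfl fun i _ => ?_
    rw [mul_comm, Real.exp_mul, Real.rpow_intCast]
  rw [hB.measure_rescale, hB.exponents_eq_of_equidim (hq j), Subgroup.coe_inv,
    Units.val_inv_eq_inv_val, hγ, inv_div, mul_div_cancel₀ _ (hB.measure_pos hK _).ne']

end ScalableMonoid.IsBasis

/-- Barenblatt's lemma, part 2: in a quantity space over the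
positive reals, let `b₁, …, b_r` be independent, and let `d ~ 1_Q` and
`dᵢ ~ 1_Q` for all `i`. If a quantity function `Ψ` taking admissible tuples
(`pᵢ ~ dᵢ`, `qⱼ ~ bⱼ`) to quantities `~ d` has a covariant scalar
representation, then `Ψ` does not depend on its last `r` arguments;
equivalently there is `Φ` with `Ψ(p, q) = Φ(p)` on admissible inputs. -/
theorem barenblatt_lemma_part2 {Q : Type*} [CommMonoid Q]
    (M : ScalableMonoid ℝ Q) (hK : M.K = {x : ℝ | 0 < x})
    (hQS : M.IsQuantitySpace)
    {m r : ℕ} (d : Q) (dd : Fin m → Q) (b : Fin r → Qˣ)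
    (hb : ∀ lam : ℝ, lam ∈ M.K → ∀ kv : Fin r → ℤ,
      M.smul lam (↑(∏ j, b j ^ kv j) : Q) = 1 → kv = 0)
    (hd : M.Equidim d 1) (hdd : ∀ i, M.Equidim (dd i) 1)
    (Ψ : (Fin m → Q) → (Fin r → Q) → Q)
    (hΨ : ∀ (p : Fin m → Q) (q : Fin r → Q),
      (∀ i, M.Equidim (p i) (dd i)) → (∀ j, M.Equidim (q j) ↑(b j)) →
      M.Equidim (Ψ p q) d)
    (hcov : ∃ ψ : (Fin m → ℝ) → (Fin r → ℝ) → ℝ,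
      ∀ {nB : ℕ} {bB : Fin nB → Qˣ} (hB : M.IsBasis bB)
        (p : Fin m → Q) (q : Fin r → Q),
        (∀ i, M.Equidim (p i) (dd i)) → (∀ j, M.Equidim (q j) ↑(b j)) →
        ψ (fun i => M.measure hB (p i)) (fun j => M.measure hB (q j)) =
          M.measure hB (Ψ p q)) :
    (∀ (p : Fin m → Q) (q q' : Fin r → Q),
      (∀ i, M.Equidim (p i) (dd i)) →
      (∀ j, M.Equidim (q j) ↑(b j)) → (∀ j, M.Equidim (q' j) ↑(b j)) →
      Ψ p q = Ψ p q') ∧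
    (∃ Φ : (Fin m → Q) → Q, ∀ (p : Fin m → Q) (q : Fin r → Q),
      (∀ i, M.Equidim (p i) (dd i)) → (∀ j, M.Equidim (q j) ↑(b j)) →
      Ψ p q = Φ p) := by
  obtain ⟨n, e, hB⟩ := hQS
  obtain ⟨ψ, hψ⟩ := hcov
  have key : ∀ (p : Fin m → Q) (q q' : Fin r → Q),
      (∀ i, M.Equidim (p i) (dd i)) →
      (∀ j, M.Equidim (q j) ↑(b j)) → (∀ j, M.Equidim (q' j) ↑(b j)) →
      Ψ p q = Ψ p q' := by
    intro p q q' hp hq hq'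
    obtain ⟨γ, hγ⟩ := hB.exists_rescale_measure_eq hK hb hq (hB.measure_pos hK <| q' ·)
    have hμp : ∀ i, M.measure (hB.rescale γ) (p i) = M.measure hB (p i) := fun i =>
      hB.measure_rescale_of_equidim_one γ ((hp i).trans (hdd i))
    refine hB.eq_of_equidim_of_measure_eq ((hΨ p q hp hq).trans (hΨ p q' hp hq').symm) ?_
    calc M.measure hB (Ψ p q)
        = M.measure (hB.rescale γ) (Ψ p q) :=
          (hB.measure_rescale_of_equidim_one γ ((hΨ p q hp hq).trans hd)).symm
      _ = ψ (fun i => M.measure hB (p i)) (fun j => M.measure hB (q' j)) := by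
          rw [← hψ (hB.rescale γ) p q hp hq, funext hμp, funext hγ]
      _ = M.measure hB (Ψ p q') := hψ hB p q' hp hq'
  exact ⟨key, fun p => Ψ p (fun j => b j), fun p q hp hq =>
    key p q _ hp hq fun j => .refl _⟩
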